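/- Assume c_A = c_B = c. Let G be a pairwise-stable connected graph on V, let i, j be vertices with d_G(i,j) = k + 1 for some integer k ≥ 1, and for vertices u, v define T_u(v) = { x ∈ V : d_G(u,x) = d_G(u,v) + d_G(v,x) } (the vertices having a shortest path from u passing through v). Then |T_i(j)| ≤ c/k or |T_j(i)| ≤ c/k. -/

import Mathlib

open SimpleGraph Classical
open scoped ENNReal

noncomputable section

variable {V : Type*} [Fintype V] [DecidableEq V]

/-- The degree of node `i` in `G`. -/
def degE (G : SimpleGraph V) (i : V) : ℕ := (G.neighborSet i).ncard

/-- The hop distance between `i` and `j`, with value `+∞` for unreachable pairs. -/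
def dE (G : SimpleGraph V) (i j : V) : ℝ≥0∞ :=
  if G.Reachable i j then (G.dist i j : ℝ≥0∞) else ⊤

/-- Basic model: the cost of node `i`, where a node of type A (in `TA`) pays link
cost `cA`, a node of type B (not in `TA`) pays `cB`, distances to type-A nodes are
weighted by `A` and to type-B nodes by `1`. -/
def cost (TA : Finset V) (A cA cB : ℝ) (G : SimpleGraph V) (i : V) : ℝ≥0∞ :=
  (degE G i : ℝ≥0∞) * ENNReal.ofReal (if i ∈ TA then cA else cB)
    + ENNReal.ofReal A * ∑ j ∈ TA, dE G i j
    + ∑ j ∈ TAᶜ, dE G i j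

/-- `G` with the edge `ij` removed. -/
def delE (G : SimpleGraph V) (i j : V) : SimpleGraph V := G.deleteEdges {s(i, j)}

/-- `G` with the edge `ij` added. -/
def addE (G : SimpleGraph V) (i j : V) : SimpleGraph V := G ⊔ edge i j

/-- Pairwise stability: removing any present edge strictly increases the cost of both
endpoints, and adding any absent edge strictly increases the cost of at least one
endpoint. -/
def PairwiseStable (TA : Finset V) (A cA cB : ℝ) (G : SimpleGraph V) : Prop :=
  (∀ i j : V, G.Adj i j →
    cost TA A cA cB G i < cost TA A cA cB (delE G i j) i ∧
    cost TA A cA cB G j < cost TA A cA cB (delE G i j) j) ∧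
  (∀ i j : V, i ≠ j → ¬ G.Adj i j →
    cost TA A cA cB G i < cost TA A cA cB (addE G i j) i ∨
    cost TA A cA cB G j < cost TA A cA cB (addE G i j) j)

/-!
Adding the absent link `ij` raises the link cost of `i` by `c` and puts every vertex of
`T_i(j)` at distance at most `1 + d(j,x) = d(i,x) - k` from `i`; since all distance weights
are at least `1`, the distance cost of `i` drops by at least `k·|T_i(j)|`. Stability means one
endpoint, say `i`, strictly loses from the link, so `k·|T_i(j)| < c`.
-/

/-- The set `T_u(v)`. -/
def behind (G : SimpleGraph V) (u v : V) : Finset V :=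
  {x | G.dist u x = G.dist u v + G.dist v x}

section

omit [Fintype V] [DecidableEq V]

variable {G : SimpleGraph V} {i j : V}

lemma ne_and_not_adj_of_one_lt_dist (h : 1 < G.dist i j) : i ≠ j ∧ ¬ G.Adj i j := by
  refine ⟨fun hij => ?_, fun hadj => ?_⟩
  · subst hij
    simp at h
  · rw [dist_eq_one_iff_adj.2 hadj] at h
    exact lt_irrefl 1 h

lemma addE_comm (G : SimpleGraph V) (i j : V) : addE G i j = addE G j i := by
  rw [addE, addE, edge_comm]

lemma le_addE (G : SimpleGraph V) (i j : V) : G ≤ addE G i j := le_sup_left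

lemma addE_adj (hne : i ≠ j) : (addE G i j).Adj i j := by
  simp [addE, edge_adj, hne]

lemma neighborSet_addE (hne : i ≠ j) :
    (addE G i j).neighborSet i = insert j (G.neighborSet i) := by
  ext x
  simp only [mem_neighborSet, addE, sup_adj, edge_adj, Set.mem_insert_iff]
  aesop

end

section

omit [DecidableEq V]

variable {G : SimpleGraph V} {i j : V}

lemma card_behind (G : SimpleGraph V) (u v : V) :
    (behind G u v).card = Nat.card {x : V | G.dist u x = G.dist u v + G.dist v x} := by
  simp [behind, Nat.card_eq_fintype_card, Fintype.card_subtype]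

lemma degE_addE (hne : i ≠ j) (hnadj : ¬ G.Adj i j) : degE (addE G i j) i = degE G i + 1 := by
  rw [degE, degE, neighborSet_addE hne, Set.ncard_insert_of_notMem (by simpa using hnadj)]

lemma dist_addE_add_le_of_mem_behind (hconn : G.Connected) (hne : i ≠ j) {k : ℕ}
    (hd : G.dist i j = k + 1) {x : V} (hx : x ∈ behind G i j) :
    (addE G i j).dist i x + k ≤ G.dist i x := by
  have hx : G.dist i x = G.dist i j + G.dist j x := by simpa [behind] using hx
  have hconn' : (addE G i j).Connected := hconn.mono (le_addE G i j)
  have hij : (addE G i j).dist i j = 1 := dist_eq_one_iff_adj.2 (addE_adj hne)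
  have hjx : (addE G i j).dist j x ≤ G.dist j x := (hconn j x).dist_anti (le_addE G i j)
  have := hconn'.dist_triangle (u := i) (v := j) (w := x)
  omega

end

section

variable {G : SimpleGraph V} {i j : V}

lemma dE_of_connected (hconn : G.Connected) (u v : V) : dE G u v = G.dist u v :=
  if_pos (hconn u v)

lemma dE_addE_add_le (hconn : G.Connected) (hne : i ≠ j) {k : ℕ} (hd : G.dist i j = k + 1)
    (x : V) :
    dE (addE G i j) i x + (if x ∈ behind G i j then (k : ℝ≥0∞) else 0) ≤ dE G i x := by
  rw [dE_of_connected hconn, dE_of_connected (hconn.mono (le_addE G i j))]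
  split_ifs with hx
  · exact_mod_cast dist_addE_add_le_of_mem_behind hconn hne hd hx
  · simpa using (hconn i x).dist_anti (le_addE G i j)

end

lemma ENNReal.sum_mul_add_sum_le_sum_mul {ι : Type*} (s : Finset ι) {w D D' f : ι → ℝ≥0∞}
    (hw : ∀ x ∈ s, 1 ≤ w x) (h : ∀ x ∈ s, D' x + f x ≤ D x) :
    ∑ x ∈ s, w x * D' x + ∑ x ∈ s, f x ≤ ∑ x ∈ s, w x * D x :=
  calc ∑ x ∈ s, w x * D' x + ∑ x ∈ s, f x
      ≤ ∑ x ∈ s, w x * D' x + ∑ x ∈ s, w x * f x := by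
        gcongr with x hx
        exact le_mul_of_one_le_left' (hw x hx)
    _ = ∑ x ∈ s, w x * (D' x + f x) := by simp only [mul_add, Finset.sum_add_distrib]
    _ ≤ ∑ x ∈ s, w x * D x := by
        gcongr with x hx
        exact h x hx

lemma cost_eq_sum (TA : Finset V) (A cA cB : ℝ) (G : SimpleGraph V) (i : V) :
    cost TA A cA cB G i = degE G i * ENNReal.ofReal (if i ∈ TA then cA else cB)
      + ∑ x, (if x ∈ TA then ENNReal.ofReal A else 1) * dE G i x := by
  simp [cost, ite_mul, Finset.sum_ite, Finset.mul_sum, add_assoc, ← Finset.compl_filter]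

lemma cost_addE_add_le (TA : Finset V) (A cA cB : ℝ) (hA : 1 ≤ A) (G : SimpleGraph V)
    (hconn : G.Connected) {i j : V} (hne : i ≠ j) (hnadj : ¬ G.Adj i j) {k : ℕ}
    (hd : G.dist i j = k + 1) :
    cost TA A cA cB (addE G i j) i + k * (behind G i j).card
      ≤ cost TA A cA cB G i + ENNReal.ofReal (if i ∈ TA then cA else cB) := by
  have hweight : ∀ x ∈ Finset.univ, 1 ≤ if x ∈ TA then ENNReal.ofReal A else 1 := by
    intro x _
    split_ifs
    · exact ENNReal.one_le_ofReal.2 hA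
    · exact le_rfl
  have hdist := ENNReal.sum_mul_add_sum_le_sum_mul Finset.univ hweight
    (fun x _ => dE_addE_add_le hconn hne hd x)
  have hcard : ∑ x, (if x ∈ behind G i j then (k : ℝ≥0∞) else 0) = k * (behind G i j).card := by
    simp [Finset.sum_ite_mem, mul_comm]
  rw [hcard] at hdist
  rw [cost_eq_sum, cost_eq_sum, degE_addE hne hnadj]
  set ℓ := ENNReal.ofReal (if i ∈ TA then cA else cB)
  set w : V → ℝ≥0∞ := fun x => if x ∈ TA then ENNReal.ofReal A else 1
  calc ((degE G i + 1 : ℕ) : ℝ≥0∞) * ℓ + ∑ x, w x * dE (addE G i j) i x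
        + k * (behind G i j).card
      = degE G i * ℓ + (∑ x, w x * dE (addE G i j) i x + k * (behind G i j).card) + ℓ := by
        push_cast; ring
    _ ≤ degE G i * ℓ + ∑ x, w x * dE G i x + ℓ := by gcongr

lemma cost_ne_top (TA : Finset V) (A cA cB : ℝ) {G : SimpleGraph V} (hconn : G.Connected)
    (i : V) : cost TA A cA cB G i ≠ ⊤ := by
  simp [cost, dE_of_connected hconn, ENNReal.mul_eq_top]

lemma natCard_le_div_of_cost_lt_cost_addE (TA : Finset V) (A cA cB : ℝ) (hA : 1 ≤ A)
    (G : SimpleGraph V) (hconn : G.Connected) {i j : V} {k : ℕ} (hk : 1 ≤ k)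
    (hd : G.dist i j = k + 1) (hst : cost TA A cA cB G i < cost TA A cA cB (addE G i j) i) :
    (Nat.card {x : V | G.dist i x = G.dist i j + G.dist j x} : ℝ)
      ≤ (if i ∈ TA then cA else cB) / k := by
  obtain ⟨hne, hnadj⟩ := ne_and_not_adj_of_one_lt_dist (by omega : 1 < G.dist i j)
  have hlt : ((k * (behind G i j).card : ℕ) : ℝ≥0∞)
      < ENNReal.ofReal (if i ∈ TA then cA else cB) := by
    have := (ENNReal.add_lt_add_right (by finiteness) hst).trans_le
      (cost_addE_add_le TA A cA cB hA G hconn hne hnadj hd)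
    push_cast
    exact (ENNReal.add_lt_add_iff_left (cost_ne_top TA A cA cB hconn i)).1 this
  rw [ENNReal.lt_ofReal_iff_toReal_lt (ENNReal.natCast_ne_top _), ENNReal.toReal_natCast] at hlt
  rw [← card_behind, le_div_iff₀ (by positivity)]
  push_cast at hlt
  linarith

theorem stmt10_general (TA : Finset V) (A c : ℝ)
    (hA : 1 < A)
    (G : SimpleGraph V) (hconn : G.Connected)
    (hstable : PairwiseStable TA A c c G)
    (i j : V) (k : ℕ) (hk : 1 ≤ k) (hd : G.dist i j = k + 1) :
    (Nat.card {x : V | G.dist i x = G.dist i j + G.dist j x} : ℝ) ≤ c / k ∨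
    (Nat.card {x : V | G.dist j x = G.dist j i + G.dist i x} : ℝ) ≤ c / k := by
  obtain ⟨hne, hnadj⟩ := ne_and_not_adj_of_one_lt_dist (by omega : 1 < G.dist i j)
  rcases hstable.2 i j hne hnadj with hi | hj
  · left
    simpa only [ite_self] using natCard_le_div_of_cost_lt_cost_addE TA A c c hA.le G hconn hk hd hi
  · right
    rw [addE_comm] at hj
    simpa only [ite_self] using
      natCard_le_div_of_cost_lt_cost_addE TA A c c hA.le G hconn hk (G.dist_comm ▸ hd) hj

/-- Assume `c_A = c_B = c`. Let `G` be pairwise stable and connected,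
let `d_G(i,j) = k + 1` with `k ≥ 1`, and for vertices `u, v` let
`T_u(v) = {x | d_G(u,x) = d_G(u,v) + d_G(v,x)}` be the set of vertices having a shortest
path from `u` passing through `v`. Then `|T_i(j)| ≤ c/k` or `|T_j(i)| ≤ c/k`. -/
theorem stmt10 (TA : Finset V) (A c : ℝ)
    (hA : 1 < A) (hc : 1 < c)
    (G : SimpleGraph V) (hconn : G.Connected)
    (hstable : PairwiseStable TA A c c G)
    (i j : V) (k : ℕ) (hk : 1 ≤ k) (hd : G.dist i j = k + 1) :
    (Nat.card {x : V | G.dist i x = G.dist i j + G.dist j x} : ℝ) ≤ c / k ∨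
    (Nat.card {x : V | G.dist j x = G.dist j i + G.dist i x} : ℝ) ≤ c / k :=
  stmt10_general TA A c hA G hconn hstable i j k hk hd

end
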